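/- arXiv:2106.04000 — 2 statements merged into one kernel-verified Lean document; each statement's English description precedes it below -/
import Mathlib

section
/- Let s ∈ H₂(Λ₊) be such that the multiplication operator M_s f = s ⊙ f is everywhere defined and a contraction on H₂(Λ₊). Then s is a discrete analytic Schur function, i.e., Σ_{n=0}^∞ |(Zⁿs)(z)|² < ∞ for every z ∈ Λ₊ and the kernel K^s_w(z) = Σ_{n=0}^∞ (z^{(n)}(z)·conj(w^{(n)}(w)) − (Zⁿs)(z)·conj((Zⁿs)(w))) is positive semidefinite on Λ₊. -/
open Complex Finset GaussianInt

noncomputable section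

/-- The lattice point `i` in the Gaussian integers. -/
def ii : GaussianInt := ⟨0, 1⟩

/-- `f` is discrete analytic on the whole lattice `Λ = ℤ + iℤ`. -/
def DAnalytic (f : GaussianInt → ℂ) : Prop :=
  ∀ z : GaussianInt,
    (f (z + 1 + ii) - f z) / (1 + Complex.I) = (f (z + 1) - f (z + ii)) / (1 - Complex.I)

/-- `f` is discrete analytic on the right half lattice `Λ₊ = {z : Re z ≥ 0}`. -/
def DAnalyticOn (f : GaussianInt → ℂ) : Prop :=
  ∀ z : GaussianInt, 0 ≤ z.re →
    (f (z + 1 + ii) - f z) / (1 + Complex.I) = (f (z + 1) - f (z + ii)) / (1 - Complex.I)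

/-- `γ 0, γ 1, …, γ n` is a path in the lattice from `a` to `b`:
consecutive points are at distance `1`. -/
def IsPath (γ : ℕ → GaussianInt) (n : ℕ) (a b : GaussianInt) : Prop :=
  γ 0 = a ∧ γ n = b ∧ ∀ k < n, ‖(γ (k + 1) : ℂ) - (γ k : ℂ)‖ = 1

/-- The discrete integral `∫_γ f δz` along the path `γ 0, …, γ n`. -/
def discInt (f : GaussianInt → ℂ) (γ : ℕ → GaussianInt) (n : ℕ) : ℂ :=
  ∑ k ∈ Finset.range n, ((f (γ k) + f (γ (k + 1))) / 2) * ((γ (k + 1) : ℂ) - (γ k : ℂ))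

/-- The canonical lattice path from `0` to `z`: first along the real axis, then vertically. -/
def cpath (z : GaussianInt) (k : ℕ) : GaussianInt :=
  ⟨z.re.sign * ((min k z.re.natAbs : ℕ) : ℤ),
   z.im.sign * ((min k (z.re.natAbs + z.im.natAbs) - z.re.natAbs : ℕ) : ℤ)⟩

/-- The length of the canonical path from `0` to `z`. -/
def cpathLen (z : GaussianInt) : ℕ := z.re.natAbs + z.im.natAbs

/-- The operator `Z`: `Zf(z) = (f(0) - f(z))/2 + ∫_0^z f δz`, the integral being taken
along the canonical path (for discrete analytic `f` the integral is path-independent). -/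
def Zop (f : GaussianInt → ℂ) : GaussianInt → ℂ := fun z =>
  (f 0 - f z) / 2 + discInt f (cpath z) (cpathLen z)

/-- The basic discrete analytic polynomials `z⁽ⁿ⁾ = Zⁿ1`. -/
def zpoly (n : ℕ) : GaussianInt → ℂ := Zop^[n] (fun _ => 1)

/-- `α₊ = (1+i)/2`. -/
def aPlus : ℂ := (1 + Complex.I) / 2
/-- `α₋ = (1-i)/2`. -/
def aMinus : ℂ := (1 - Complex.I) / 2

/-- The difference operator `δx`. -/
def dxOp (f : GaussianInt → ℂ) : GaussianInt → ℂ := fun z => f (z + 1) - f z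
/-- The difference operator `δy`. -/
def dyOp (f : GaussianInt → ℂ) : GaussianInt → ℂ := fun z => f (z + ii) - f z

/-- `f` belongs to the Hardy space `H₂(Λ₊)` with coefficient sequence `c`:
`f(z) = Σ c(n) z⁽ⁿ⁾(z)` on `Λ₊` and `Σ |c(n)|² < ∞`. -/
def MemH2 (f : GaussianInt → ℂ) (c : ℕ → ℂ) : Prop :=
  Summable (fun n => ‖c n‖ ^ 2) ∧
  ∀ z : GaussianInt, 0 ≤ z.re → HasSum (fun n => c n * zpoly n z) (f z)


open scoped ComplexOrder

/-- The convolution (Cauchy) product of coefficient sequences. -/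
def convC (a b : ℕ → ℂ) (n : ℕ) : ℂ := ∑ m ∈ Finset.range (n + 1), a m * b (n - m)

/-- The kernel `K^s_w(z) = Σₙ (z⁽ⁿ⁾(z) conj (w⁽ⁿ⁾(w)) − (Zⁿs)(z) conj ((Zⁿs)(w)))`. -/
def schurKer (s : GaussianInt → ℂ) (w z : GaussianInt) : ℂ :=
  ∑' n : ℕ, (zpoly n z * (starRingEnd ℂ) (zpoly n w)
      - (Zop^[n] s) z * (starRingEnd ℂ) ((Zop^[n] s) w))

/-- `s` is a discrete analytic Schur function: `s` is discrete analytic on `Λ₊`,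
`Σₙ |(Zⁿs)(z)|² < ∞` for every `z ∈ Λ₊`, and the kernel `K^s_w(z)` is positive
semidefinite on `Λ₊`. -/
def IsSchur (s : GaussianInt → ℂ) : Prop :=
  DAnalyticOn s ∧
  (∀ z : GaussianInt, 0 ≤ z.re → Summable (fun n : ℕ => ‖(Zop^[n] s) z‖ ^ 2)) ∧
  ∀ (m : ℕ) (w : Fin m → GaussianInt), (∀ j, 0 ≤ (w j).re) →
    (Matrix.of fun j k : Fin m => schurKer s (w k) (w j)).PosSemidef
-- Part I : path lemmas
lemma sgn_mul_sign (a : ℤ) (C : ℕ) : (a.sign * (C:ℤ)).sign = if C = 0 then 0 else a.sign := by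
  cases C with
  | zero => simp
  | succ n =>
    rw [Int.sign_mul]
    have : ((n.succ : ℤ)).sign = 1 := by
      rw [Int.sign_eq_one_iff_pos]; positivity
    simp [this, Int.sign_sign]

lemma sgn_mul_natAbs (a : ℤ) (C : ℕ) : (a.sign * (C:ℤ)).natAbs = if a = 0 then 0 else C := by
  rw [Int.natAbs_mul, Int.natAbs_sign]
  split_ifs <;> simp [*]

lemma cpath_zero (z : GaussianInt) : cpath z 0 = 0 := by
  apply Zsqrtd.ext <;> simp [cpath]

lemma cpath_re_natAbs (z : GaussianInt) (k : ℕ) :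
    (cpath z k).re.natAbs = min k z.re.natAbs := by
  show (z.re.sign * _).natAbs = _
  rw [sgn_mul_natAbs]
  split_ifs with h
  · simp [h]
  · rfl

lemma cpath_im_natAbs (z : GaussianInt) (k : ℕ) :
    (cpath z k).im.natAbs = min k (z.re.natAbs + z.im.natAbs) - z.re.natAbs := by
  show (z.im.sign * _).natAbs = _
  rw [sgn_mul_natAbs]
  split_ifs with h
  · simp [h]
  · rfl

lemma cpath_last (z : GaussianInt) : cpath z (cpathLen z) = z := by
  apply Zsqrtd.ext
  · show z.re.sign * ((min (z.re.natAbs + z.im.natAbs) z.re.natAbs : ℕ) : ℤ) = _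
    rw [min_eq_right (by omega : z.re.natAbs ≤ z.re.natAbs + z.im.natAbs)]
    exact Int.sign_mul_natAbs z.re
  · show z.im.sign * ((min (z.re.natAbs + z.im.natAbs) (z.re.natAbs + z.im.natAbs)
        - z.re.natAbs : ℕ) : ℤ) = _
    rw [min_self]
    have : z.re.natAbs + z.im.natAbs - z.re.natAbs = z.im.natAbs := by omega
    rw [this]
    exact Int.sign_mul_natAbs z.im

lemma cpath_re_nonneg {z : GaussianInt} (h : 0 ≤ z.re) (k : ℕ) : 0 ≤ (cpath z k).re := by
  show 0 ≤ z.re.sign * _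
  have : 0 ≤ z.re.sign := Int.sign_nonneg_iff.mpr h
  positivity

lemma cpathLen_cpath (z : GaussianInt) (k : ℕ) (hk : k ≤ cpathLen z) :
    cpathLen (cpath z k) = k := by
  show (cpath z k).re.natAbs + (cpath z k).im.natAbs = k
  rw [cpathLen] at hk
  rw [cpath_re_natAbs, cpath_im_natAbs]
  omega

lemma cpath_prefix (z : GaussianInt) (k j : ℕ) (hk : k ≤ cpathLen z) (hj : j ≤ k) :
    cpath (cpath z k) j = cpath z j := by
  have hre : (cpath z k).re = z.re.sign * ((min k z.re.natAbs : ℕ) : ℤ) := rfl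
  have him : (cpath z k).im
      = z.im.sign * ((min k (z.re.natAbs + z.im.natAbs) - z.re.natAbs : ℕ) : ℤ) := rfl
  rw [cpathLen] at hk
  apply Zsqrtd.ext
  · show (cpath z k).re.sign * ((min j (cpath z k).re.natAbs : ℕ) : ℤ) = z.re.sign * _
    rw [cpath_re_natAbs, hre, sgn_mul_sign]
    split_ifs with h
    · have : min j z.re.natAbs = 0 := by omega
      have h2 : min j (min k z.re.natAbs) = 0 := by omega
      rw [this, h2]; simp
    · congr 2
      omega
  · show (cpath z k).im.sign * ((min j ((cpath z k).re.natAbs + (cpath z k).im.natAbs)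
        - (cpath z k).re.natAbs : ℕ) : ℤ) = z.im.sign * _
    rw [cpath_re_natAbs, cpath_im_natAbs, him, sgn_mul_sign]
    split_ifs with h
    · have : min j (z.re.natAbs + z.im.natAbs) - z.re.natAbs = 0 := by omega
      rw [this]; simp
    · congr 2
      omega

lemma sign_cases (a : ℤ) : a.sign = -1 ∨ a.sign = 0 ∨ a.sign = 1 := by
  rcases Int.lt_trichotomy a 0 with h|h|h
  · left; exact Int.sign_eq_neg_one_of_neg h
  · right; left; simp [h]
  · right; right; exact Int.sign_eq_one_of_pos h

lemma cpath_step_int (z : GaussianInt) (j : ℕ) :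
    ((cpath z (j+1)).re - (cpath z j).re).natAbs ≤ 1 ∧
    ((cpath z (j+1)).im - (cpath z j).im).natAbs ≤ 1 ∧
    ((cpath z (j+1)).re ≠ (cpath z j).re → (cpath z (j+1)).im = (cpath z j).im) := by
  have h1 : (cpath z j).re = z.re.sign * ((min j z.re.natAbs : ℕ) : ℤ) := rfl
  have h2 : (cpath z (j+1)).re = z.re.sign * ((min (j+1) z.re.natAbs : ℕ) : ℤ) := rfl
  have h3 : (cpath z j).im
      = z.im.sign * ((min j (z.re.natAbs + z.im.natAbs) - z.re.natAbs : ℕ) : ℤ) := rfl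
  have h4 : (cpath z (j+1)).im
      = z.im.sign * ((min (j+1) (z.re.natAbs + z.im.natAbs) - z.re.natAbs : ℕ) : ℤ) := rfl
  rw [h1, h2, h3, h4]
  rcases sign_cases z.re with hr|hr|hr <;> rcases sign_cases z.im with hi|hi|hi <;>
    rw [hr, hi] <;> refine ⟨by omega, by omega, fun hne => by omega⟩

lemma cpath_step_re_nonneg {z : GaussianInt} (h : 0 ≤ z.re) (j : ℕ) :
    (cpath z (j+1)).re - (cpath z j).re = 0 ∨ (cpath z (j+1)).re - (cpath z j).re = 1 := by
  have h1 : (cpath z j).re = z.re.sign * ((min j z.re.natAbs : ℕ) : ℤ) := rfl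
  have h2 : (cpath z (j+1)).re = z.re.sign * ((min (j+1) z.re.natAbs : ℕ) : ℤ) := rfl
  have hs : z.re.sign = 0 ∨ z.re.sign = 1 := by
    rcases sign_cases z.re with hr|hr|hr
    · exfalso; have := Int.sign_eq_neg_one_iff_neg.mp hr; omega
    · left; exact hr
    · right; exact hr
  rw [h1, h2]
  rcases hs with hs|hs <;> rw [hs] <;> omega

lemma gstep (z : GaussianInt) (j : ℕ) :
    ((cpath z (j+1) : ℂ) - (cpath z j : ℂ))
      = (((cpath z (j+1)).re - (cpath z j).re : ℤ) : ℂ)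
        + (((cpath z (j+1)).im - (cpath z j).im : ℤ) : ℂ) * Complex.I := by
  rw [toComplex_def, toComplex_def]
  push_cast
  ring

lemma abs_ofInt_le (a : ℤ) (n : ℕ) (h : a.natAbs ≤ n) : ‖((a:ℤ):ℂ)‖ ≤ n := by
  rw [Complex.norm_intCast]
  have : |a| ≤ (n:ℤ) := by rw [Int.abs_eq_natAbs]; omega
  exact_mod_cast this

lemma cpath_step_abs (z : GaussianInt) (j : ℕ) :
    ‖(cpath z (j+1) : ℂ) - (cpath z j : ℂ)‖ ≤ 1 := by
  obtain ⟨hre, him, hortho⟩ := cpath_step_int z j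
  rw [gstep]
  by_cases hc : (cpath z (j+1)).re = (cpath z j).re
  · rw [hc]
    simp only [sub_self, Int.cast_zero, Complex.ofReal_zero, zero_add]
    have := abs_ofInt_le ((cpath z (j+1)).im - (cpath z j).im) 1 him
    calc ‖_‖
        = ‖(((((cpath z (j+1)).im - (cpath z j).im : ℤ)) : ℂ))‖ := by
          rw [norm_mul, Complex.norm_I, mul_one]
      _ ≤ 1 := by simpa using this
  · rw [hortho hc]
    simp only [sub_self, Int.cast_zero, zero_mul, add_zero]
    exact_mod_cast abs_ofInt_le _ 1 hre

lemma cpath_step_abs_sub_one {z : GaussianInt} (h : 0 ≤ z.re) (j : ℕ) :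
    ‖(cpath z (j+1) : ℂ) - (cpath z j : ℂ) - 1‖ ≤ 3/2 := by
  obtain ⟨hre, him, hortho⟩ := cpath_step_int z j
  rcases cpath_step_re_nonneg h j with h0|h1
  · -- re difference 0 : step is vertical, |step - 1| ≤ √2 ≤ 3/2
    have hx : (cpath z (j+1) : ℂ) - (cpath z j : ℂ) - 1
        = -1 + (((cpath z (j+1)).im - (cpath z j).im : ℤ) : ℂ) * Complex.I := by
      rw [gstep, h0]; push_cast; ring
    rw [hx]
    set b : ℤ := (cpath z (j+1)).im - (cpath z j).im with hb
    have hsq : (‖(-1 + (b:ℂ) * Complex.I)‖)^2 ≤ 2 := by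
      have hb1 : b = -1 ∨ b = 0 ∨ b = 1 := by omega
      rcases hb1 with hb1|hb1|hb1 <;> rw [hb1] <;>
        simp [Complex.sq_norm, Complex.normSq_apply] <;> norm_num
    nlinarith [norm_nonneg (-1 + (b:ℂ) * Complex.I)]
  · -- re difference 1: then im difference 0, step = 1
    have hne : (cpath z (j+1)).re ≠ (cpath z j).re := by omega
    have hx : (cpath z (j+1) : ℂ) - (cpath z j : ℂ) - 1 = 0 := by
      rw [gstep, h1, hortho hne]; push_cast; ring
    rw [hx]
    simp only [norm_zero]
    norm_num

-- components of z + ii and z + 1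
lemma add_ii_re (z : GaussianInt) : (z + ii).re = z.re := by
  show z.re + (0:ℤ) = z.re
  ring
lemma add_ii_im (z : GaussianInt) : (z + ii).im = z.im + 1 := rfl
lemma add_one_re (z : GaussianInt) : (z + 1).re = z.re + 1 := rfl
lemma add_one_im (z : GaussianInt) : (z + 1).im = z.im := by
  show z.im + (0:ℤ) = z.im
  ring

lemma ext_ii_up (z : GaussianInt) (h : 0 ≤ z.im) :
    cpathLen (z + ii) = cpathLen z + 1 ∧
      ∀ j ≤ cpathLen z, cpath (z + ii) j = cpath z j := by
  have hre := add_ii_re z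
  have him := add_ii_im z
  have hnre : (z + ii).re.natAbs = z.re.natAbs := by rw [hre]
  have hnim : (z + ii).im.natAbs = z.im.natAbs + 1 := by rw [him]; omega
  constructor
  · show (z+ii).re.natAbs + (z+ii).im.natAbs = _
    rw [hnre, hnim]; rfl
  · intro j hj
    rw [cpathLen] at hj
    apply Zsqrtd.ext
    · show (z+ii).re.sign * ((min j (z+ii).re.natAbs : ℕ) : ℤ) = z.re.sign * _
      rw [hre]
    · show (z+ii).im.sign * ((min j ((z+ii).re.natAbs + (z+ii).im.natAbs) - (z+ii).re.natAbs : ℕ) : ℤ)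
        = z.im.sign * _
      rw [hnre, hnim, him]
      by_cases hz : z.im = 0
      · have hI : z.im.natAbs = 0 := by omega
        have e1 : min j (z.re.natAbs + z.im.natAbs) - z.re.natAbs = 0 := by omega
        have e2 : min j (z.re.natAbs + (z.im.natAbs + 1)) - z.re.natAbs = 0 := by omega
        rw [e1, e2]; simp
      · have h1 : (z.im + 1).sign = 1 := Int.sign_eq_one_of_pos (by omega)
        have h2 : z.im.sign = 1 := Int.sign_eq_one_of_pos (by omega)
        rw [h1, h2]
        congr 2
        omega

lemma ext_ii_down (z : GaussianInt) (h : z.im < 0) :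
    cpathLen z = cpathLen (z + ii) + 1 ∧
      ∀ j ≤ cpathLen (z + ii), cpath z j = cpath (z + ii) j := by
  have hre := add_ii_re z
  have him := add_ii_im z
  have hnre : (z + ii).re.natAbs = z.re.natAbs := by rw [hre]
  have hnim : (z + ii).im.natAbs = z.im.natAbs - 1 := by rw [him]; omega
  have hIm : 1 ≤ z.im.natAbs := by omega
  constructor
  · show z.re.natAbs + z.im.natAbs = (z+ii).re.natAbs + (z+ii).im.natAbs + 1
    rw [hnre, hnim]; omega
  · intro j hj
    have hj' : j ≤ (z+ii).re.natAbs + (z+ii).im.natAbs := hj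
    rw [hnre, hnim] at hj'
    apply Zsqrtd.ext
    · show z.re.sign * _ = (z+ii).re.sign * ((min j (z+ii).re.natAbs : ℕ) : ℤ)
      rw [hre]
    · show z.im.sign * _
        = (z+ii).im.sign * ((min j ((z+ii).re.natAbs + (z+ii).im.natAbs) - (z+ii).re.natAbs : ℕ) : ℤ)
      rw [hnre, hnim, him]
      have h2 : z.im.sign = -1 := Int.sign_eq_neg_one_of_neg h
      by_cases hz : z.im + 1 = 0
      · have h1 : (z.im + 1).sign = 0 := by rw [hz]; rfl
        have hI1 : z.im.natAbs = 1 := by omega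
        have e1 : min j (z.re.natAbs + z.im.natAbs) - z.re.natAbs = 0 := by omega
        have e2 : min j (z.re.natAbs + (z.im.natAbs - 1)) - z.re.natAbs = 0 := by omega
        rw [e1, e2]; simp
      · have h1 : (z.im + 1).sign = -1 := Int.sign_eq_neg_one_of_neg (by omega)
        rw [h1, h2]
        congr 2
        omega

lemma ext_one (z : GaussianInt) (hre0 : 0 ≤ z.re) (him0 : z.im = 0) :
    cpathLen (z + 1) = cpathLen z + 1 ∧
      ∀ j ≤ cpathLen z, cpath (z + 1) j = cpath z j := by
  have hre := add_one_re z
  have him := add_one_im z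
  have hnre : (z + 1).re.natAbs = z.re.natAbs + 1 := by rw [hre]; omega
  have hnim : (z + 1).im.natAbs = 0 := by simp [him, him0]
  have hI0 : z.im.natAbs = 0 := by omega
  constructor
  · show (z+1).re.natAbs + (z+1).im.natAbs = z.re.natAbs + z.im.natAbs + 1
    omega
  · intro j hj
    rw [cpathLen, hI0] at hj
    apply Zsqrtd.ext
    · show (z+1).re.sign * ((min j (z+1).re.natAbs : ℕ) : ℤ) = z.re.sign * _
      rw [hnre, hre]
      have h1 : (z.re + 1).sign = 1 := Int.sign_eq_one_of_pos (by omega)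
      rw [h1]
      by_cases hz : z.re = 0
      · have : min j (z.re.natAbs + 1) = min j z.re.natAbs := by omega
        rw [this]
        have : min j z.re.natAbs = 0 := by omega
        rw [this]; simp
      · have h2 : z.re.sign = 1 := Int.sign_eq_one_of_pos (by omega)
        rw [h2]
        congr 2
        omega
    · show (z+1).im.sign * ((min j ((z+1).re.natAbs + (z+1).im.natAbs) - (z+1).re.natAbs : ℕ) : ℤ)
        = z.im.sign * _
      rw [him, him0]
      simp

lemma toComplex_ii : (ii : ℂ) = Complex.I := by
  rw [toComplex_def]; show ((0:ℤ):ℂ) + ((1:ℤ):ℂ) * Complex.I = Complex.I; push_cast; ring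

lemma toComplex_add_ii (z : GaussianInt) : ((z + ii : GaussianInt) : ℂ) = (z : ℂ) + Complex.I := by
  rw [toComplex_add, toComplex_ii]

lemma toComplex_add_one (z : GaussianInt) : ((z + 1 : GaussianInt) : ℂ) = (z : ℂ) + 1 := by
  rw [toComplex_add, toComplex_one]

lemma discInt_vert (f : GaussianInt → ℂ) (z : GaussianInt) :
    discInt f (cpath (z + ii)) (cpathLen (z + ii))
      = discInt f (cpath z) (cpathLen z) + (f z + f (z + ii)) / 2 * Complex.I := by
  rcases le_or_gt 0 z.im with h | h
  · obtain ⟨hlen, hpre⟩ := ext_ii_up z h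
    rw [hlen]
    unfold discInt
    rw [Finset.sum_range_succ]
    congr 1
    · apply Finset.sum_congr rfl
      intro k hk
      rw [Finset.mem_range] at hk
      rw [hpre k (by omega), hpre (k+1) (by omega)]
    · rw [hpre (cpathLen z) le_rfl, cpath_last, ← hlen, cpath_last, toComplex_add_ii]
      ring
  · obtain ⟨hlen, hpre⟩ := ext_ii_down z h
    rw [hlen]
    unfold discInt
    rw [Finset.sum_range_succ]
    have e1 : ∑ k ∈ Finset.range (cpathLen (z+ii)),
        ((f (cpath z k) + f (cpath z (k + 1))) / 2) * ((cpath z (k+1) : ℂ) - (cpath z k : ℂ))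
        = ∑ k ∈ Finset.range (cpathLen (z+ii)),
        ((f (cpath (z+ii) k) + f (cpath (z+ii) (k + 1))) / 2)
          * ((cpath (z+ii) (k+1) : ℂ) - (cpath (z+ii) k : ℂ)) := by
      apply Finset.sum_congr rfl
      intro k hk
      rw [Finset.mem_range] at hk
      rw [hpre k (by omega), hpre (k+1) (by omega)]
    rw [e1, hpre (cpathLen (z+ii)) le_rfl, cpath_last]
    have e2 : cpath z (cpathLen (z+ii) + 1) = z := by rw [← hlen, cpath_last]
    rw [e2, toComplex_add_ii]
    ring

lemma one_add_I_ne : (1 + Complex.I) ≠ 0 := by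
  intro h
  have := congrArg Complex.im h
  simp at this

lemma one_sub_I_ne : (1 - Complex.I) ≠ 0 := by
  intro h
  have := congrArg Complex.im h
  simp at this

/-- cross-multiplied form of the discrete CR equation -/
lemma CR_cross {f : GaussianInt → ℂ} (hf : DAnalyticOn f) {z : GaussianInt} (h : 0 ≤ z.re) :
    (f (z + 1 + ii) - f z) * (1 - Complex.I) = (f (z + 1) - f (z + ii)) * (1 + Complex.I) := by
  have := hf z h
  field_simp [one_add_I_ne, one_sub_I_ne] at this
  linear_combination this

lemma discInt_horiz {f : GaussianInt → ℂ} (hf : DAnalyticOn f) :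
    ∀ (t : ℕ) (z : GaussianInt), z.im.natAbs = t → 0 ≤ z.re →
      discInt f (cpath (z + 1)) (cpathLen (z + 1))
        = discInt f (cpath z) (cpathLen z) + (f z + f (z + 1)) / 2 := by
  intro t
  induction t using Nat.strong_induction_on with
  | _ t ih =>
    intro z ht hre
    by_cases h0 : z.im = 0
    · -- base case : horizontal extension
      obtain ⟨hlen, hpre⟩ := ext_one z hre h0
      rw [hlen]
      unfold discInt
      rw [Finset.sum_range_succ]
      congr 1
      · apply Finset.sum_congr rfl
        intro k hk
        rw [Finset.mem_range] at hk
        rw [hpre k (by omega), hpre (k+1) (by omega)]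
      · rw [hpre (cpathLen z) le_rfl, cpath_last, ← hlen, cpath_last, toComplex_add_one]
        ring
    · rcases lt_or_gt_of_ne h0 with hneg | hpos
      · -- z.im < 0 : work with z + ii
        have h1 := discInt_vert f z
        have h2 := discInt_vert f (z + 1)
        have hIH := ih (z + ii).im.natAbs
          (by rw [add_ii_im]; omega) (z + ii) rfl (by rw [add_ii_re]; exact hre)
        have e : z + ii + 1 = z + 1 + ii := by ring
        rw [e] at hIH
        have hCR := CR_cross hf hre
        linear_combination hIH + h1 - h2 + hCR / 2
      · -- z.im > 0 : work with u := z - ii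
        have huz : (⟨z.re, z.im - 1⟩ : GaussianInt) + ii = z := by
          apply Zsqrtd.ext
          · show z.re + 0 = z.re; ring
          · show z.im - 1 + 1 = z.im; ring
        have h1 := discInt_vert f (⟨z.re, z.im - 1⟩ : GaussianInt)
        have h2 := discInt_vert f ((⟨z.re, z.im - 1⟩ : GaussianInt) + 1)
        have hcomm : (⟨z.re, z.im - 1⟩ : GaussianInt) + 1 + ii = z + 1 := by
          rw [add_right_comm, huz]
        rw [hcomm] at h2
        rw [huz] at h1
        have hIH := ih (⟨z.re, z.im - 1⟩ : GaussianInt).im.natAbs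
          (by show (z.im - 1).natAbs < t; omega) (⟨z.re, z.im - 1⟩ : GaussianInt) rfl
          (by show (0:ℤ) ≤ z.re; exact hre)
        have hCR := CR_cross hf (z := (⟨z.re, z.im - 1⟩ : GaussianInt))
          (by show (0:ℤ) ≤ z.re; exact hre)
        rw [hcomm, huz] at hCR
        linear_combination h2 + hIH - h1 - hCR / 2

lemma Zop_dx {f : GaussianInt → ℂ} (hf : DAnalyticOn f) (z : GaussianInt) (h : 0 ≤ z.re) :
    Zop f (z + 1) = Zop f z + f z := by
  have h1 := discInt_horiz hf z.im.natAbs z rfl h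
  unfold Zop
  linear_combination h1

lemma Zop_dy (f : GaussianInt → ℂ) (z : GaussianInt) :
    Zop f (z + ii) = Zop f z + (f z + f (z + ii)) / 2 * Complex.I - (f (z + ii) - f z) / 2 := by
  have h1 := discInt_vert f z
  unfold Zop
  linear_combination h1

lemma Zop_DA {f : GaussianInt → ℂ} (hf : DAnalyticOn f) : DAnalyticOn (Zop f) := by
  intro z hz
  have e1 := Zop_dx hf z hz
  have e2 := Zop_dy f z
  have e3 := Zop_dy f (z + 1)
  have hCR := CR_cross hf hz
  rw [div_eq_div_iff one_add_I_ne one_sub_I_ne]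
  linear_combination (1 - Complex.I) * e3 + ((1 - Complex.I) - (1 + Complex.I)) * e1
    + (1 + Complex.I) * e2 - ((1 - Complex.I)/2) * hCR

lemma zpoly_succ (n : ℕ) : zpoly (n+1) = Zop (zpoly n) := by
  show Zop^[n+1] (fun _ => 1) = _
  rw [Function.iterate_succ_apply']
  rfl

lemma zpoly_DA (n : ℕ) : DAnalyticOn (zpoly n) := by
  induction n with
  | zero =>
    intro z hz
    show ((1:ℂ) - 1) / _ = ((1:ℂ) - 1) / _
    simp
  | succ n ih =>
    rw [zpoly_succ]
    exact Zop_DA ih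

lemma Zop_at_zero (g : GaussianInt → ℂ) : Zop g 0 = 0 := by
  have h : cpathLen 0 = 0 := rfl
  unfold Zop discInt
  rw [h]
  simp

lemma norm_two : ‖(2:ℂ)‖ = 2 := by
  simp

lemma Zop_bound {g : GaussianInt → ℂ} {z : GaussianInt} (hz : 0 ≤ z.re) {m : ℕ}
    (hm : m + 1 ≤ cpathLen z) (a : ℕ → ℝ) (hnn : ∀ j, 0 ≤ a j)
    (ha : ∀ j ≤ m + 1, ‖g (cpath z j)‖ ≤ a j) :
    ‖Zop g (cpath z (m+1))‖ ≤ (3/4) * a (m+1) + 2 * ∑ j ∈ Finset.range (m+1), a j := by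
  have hlen : cpathLen (cpath z (m+1)) = m + 1 := cpathLen_cpath z (m+1) hm
  have h0 : g 0 = g (cpath z 0) := by rw [cpath_zero]
  have hX : Zop g (cpath z (m+1))
      = g (cpath z (m+1)) * (((cpath z (m+1) : ℂ) - (cpath z m : ℂ) - 1)/2)
        + (g (cpath z 0) / 2 + g (cpath z m) * (((cpath z (m+1) : ℂ) - (cpath z m : ℂ))/2)
        + ∑ j ∈ Finset.range m, ((g (cpath z j) + g (cpath z (j+1))) / 2)
            * ((cpath z (j+1) : ℂ) - (cpath z j : ℂ))) := by
    unfold Zop discInt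
    rw [hlen, Finset.sum_range_succ, h0]
    have hpre : ∀ j, j ≤ m + 1 → cpath (cpath z (m+1)) j = cpath z j :=
      fun j hj => cpath_prefix z (m+1) j hm hj
    have hc : ∀ j ∈ Finset.range m,
        ((g (cpath (cpath z (m+1)) j) + g (cpath (cpath z (m+1)) (j+1))) / 2)
          * ((cpath (cpath z (m+1)) (j+1) : ℂ) - (cpath (cpath z (m+1)) j : ℂ))
        = ((g (cpath z j) + g (cpath z (j+1))) / 2)
            * ((cpath z (j+1) : ℂ) - (cpath z j : ℂ)) := by
      intro j hj
      rw [Finset.mem_range] at hj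
      rw [hpre j (by omega), hpre (j+1) (by omega)]
    rw [Finset.sum_congr rfl hc, hpre m (by omega), hpre (m+1) le_rfl]
    ring
  rw [hX]
  have hd1 : ‖(cpath z (m+1) : ℂ) - (cpath z m : ℂ) - 1‖ ≤ 3/2 := by
    exact cpath_step_abs_sub_one hz m
  have hd0 : ‖(cpath z (m+1) : ℂ) - (cpath z m : ℂ)‖ ≤ 1 := by
    exact cpath_step_abs z m
  have hA : ‖g (cpath z (m+1)) * (((cpath z (m+1) : ℂ) - (cpath z m : ℂ) - 1)/2)‖
      ≤ (3/4) * a (m+1) := by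
    rw [norm_mul, norm_div, norm_two]
    have h1 := ha (m+1) le_rfl
    have h2 := norm_nonneg (g (cpath z (m+1)))
    nlinarith [hnn (m+1)]
  have hB : ‖g (cpath z 0) / 2‖ ≤ a 0 / 2 := by
    rw [norm_div, norm_two]
    have := ha 0 (by omega)
    linarith
  have hC : ‖g (cpath z m) * (((cpath z (m+1) : ℂ) - (cpath z m : ℂ))/2)‖ ≤ a m / 2 := by
    rw [norm_mul, norm_div, norm_two]
    have h1 := ha m (by omega)
    have h2 := norm_nonneg (g (cpath z m))
    nlinarith [hnn m]
  have hD : ‖∑ j ∈ Finset.range m, ((g (cpath z j) + g (cpath z (j+1))) / 2)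
      * ((cpath z (j+1) : ℂ) - (cpath z j : ℂ))‖
      ≤ ∑ j ∈ Finset.range m, (a j + a (j+1)) / 2 := by
    refine le_trans (norm_sum_le _ _) (Finset.sum_le_sum ?_)
    intro j hj
    rw [Finset.mem_range] at hj
    rw [norm_mul, norm_div, norm_two]
    have h1 := ha j (by omega)
    have h2 := ha (j+1) (by omega)
    have hd : ‖(cpath z (j+1) : ℂ) - (cpath z j : ℂ)‖ ≤ 1 := by
      exact cpath_step_abs z j
    have h3 := norm_nonneg (g (cpath z j) + g (cpath z (j+1)))
    have h4 := norm_add_le (g (cpath z j)) (g (cpath z (j+1)))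
    nlinarith [hnn j, hnn (j+1)]
  -- final arithmetic
  have hS : ∑ j ∈ Finset.range m, (a j + a (j+1)) / 2
      ≤ ∑ j ∈ Finset.range (m+1), a j := by
    have e1 : ∑ j ∈ Finset.range m, (a j + a (j+1)) / 2
        = ((∑ j ∈ Finset.range m, a j) + (∑ j ∈ Finset.range m, a (j+1))) / 2 := by
      rw [← Finset.sum_add_distrib, Finset.sum_div]
    rw [e1]
    have e2 : ∑ j ∈ Finset.range m, a j ≤ ∑ j ∈ Finset.range (m+1), a j := by
      apply Finset.sum_le_sum_of_subset_of_nonneg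
      · exact Finset.range_subset_range.mpr (by omega)
      · intro i _ _; exact hnn i
    have e3 : ∑ j ∈ Finset.range m, a (j+1) ≤ ∑ j ∈ Finset.range (m+1), a j := by
      rw [Finset.sum_range_succ' a m]
      have := hnn 0
      linarith [le_refl (∑ j ∈ Finset.range m, a (j+1))]
    linarith
  have hS0 : a 0 ≤ ∑ j ∈ Finset.range (m+1), a j := by
    apply Finset.single_le_sum (f := a) (fun i _ => hnn i)
    simp
  have hSm : a m ≤ ∑ j ∈ Finset.range (m+1), a j := by
    apply Finset.single_le_sum (f := a) (fun i _ => hnn i)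
    simp
  have htot := norm_add_le (g (cpath z (m+1)) * (((cpath z (m+1) : ℂ) - (cpath z m : ℂ) - 1)/2))
      (g (cpath z 0) / 2 + g (cpath z m) * (((cpath z (m+1) : ℂ) - (cpath z m : ℂ))/2)
        + ∑ j ∈ Finset.range m, ((g (cpath z j) + g (cpath z (j+1))) / 2)
            * ((cpath z (j+1) : ℂ) - (cpath z j : ℂ)))
  have htot2 := norm_add_le (g (cpath z 0) / 2
        + g (cpath z m) * (((cpath z (m+1) : ℂ) - (cpath z m : ℂ))/2))
      (∑ j ∈ Finset.range m, ((g (cpath z j) + g (cpath z (j+1))) / 2)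
            * ((cpath z (j+1) : ℂ) - (cpath z j : ℂ)))
  have htot3 := norm_add_le (g (cpath z 0) / 2)
      (g (cpath z m) * (((cpath z (m+1) : ℂ) - (cpath z m : ℂ))/2))
  linarith

lemma zpoly_one (w : GaussianInt) : zpoly 1 w = (w : ℂ) := by
  show Zop^[1] (fun _ => 1) w = _
  rw [Function.iterate_one]
  unfold Zop discInt
  have e : ∀ k ∈ Finset.range (cpathLen w),
      ((((fun _ : GaussianInt => (1:ℂ)) (cpath w k)) + ((fun _ : GaussianInt => (1:ℂ)) (cpath w (k+1)))) / 2)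
        * ((cpath w (k+1) : ℂ) - (cpath w k : ℂ))
      = ((cpath w (k+1) : ℂ) - (cpath w k : ℂ)) := by
    intro k _
    norm_num
  rw [Finset.sum_congr rfl e, Finset.sum_range_sub (fun k => (cpath w k : ℂ)), cpath_last,
    cpath_zero]
  norm_num

lemma cpath_norm_le (z : GaussianInt) (k : ℕ) : ‖(cpath z k : ℂ)‖ ≤ (k : ℝ) := by
  have e : (cpath z k : ℂ) = ∑ j ∈ Finset.range k, ((cpath z (j+1) : ℂ) - (cpath z j : ℂ)) := by
    rw [Finset.sum_range_sub (fun j => (cpath z j : ℂ)), cpath_zero]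
    norm_num
  rw [e]
  calc ‖∑ j ∈ Finset.range k, ((cpath z (j+1) : ℂ) - (cpath z j : ℂ))‖
      ≤ ∑ j ∈ Finset.range k, ‖(cpath z (j+1) : ℂ) - (cpath z j : ℂ)‖ := norm_sum_le _ _
    _ ≤ ∑ _j ∈ Finset.range k, (1:ℝ) := by
        apply Finset.sum_le_sum
        intro j _
        exact cpath_step_abs z j
    _ = (k : ℝ) := by simp

lemma mygeom_le (x : ℝ) (hx : 2 ≤ x) (m : ℕ) : ∑ j ∈ Finset.range (m+1), x^j ≤ 2 * x^m := by
  induction m with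
  | zero => norm_num
  | succ m ih =>
    rw [Finset.sum_range_succ]
    have h1 : (0:ℝ) ≤ x^m := by positivity
    have h2 : 2 * x^m ≤ x^(m+1) := by
      rw [pow_succ]
      nlinarith
    calc ∑ j ∈ Finset.range (m+1), x^j + x^(m+1) ≤ 2*x^m + x^(m+1) := by linarith
      _ ≤ 2 * x^(m+1) := by linarith

lemma zpoly_growth : ∀ (n : ℕ) (z : GaussianInt), 0 ≤ z.re → ∀ k, k ≤ cpathLen z →
    ‖zpoly (n+1) (cpath z k)‖ ≤
      (if k = 0 then 0 else (3/4:ℝ)^(n+1) * ((6:ℝ)*((n:ℝ)+2))^k) := by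
  intro n
  induction n with
  | zero =>
    intro z hz k hk
    rw [zpoly_one]
    split_ifs with h0
    · rw [h0, cpath_zero]
      norm_num
    · have h1 := cpath_norm_le z k
      have hk2 : (k:ℝ) < 2^k := by exact_mod_cast Nat.lt_two_pow_self
      have h6 : (6:ℝ) ≤ 6^k := by
        calc (6:ℝ) = 6^1 := by norm_num
          _ ≤ 6^k := by
            apply pow_le_pow_right₀ (by norm_num)
            omega
      have h12 : ((6:ℝ)*(((0:ℕ):ℝ)+2))^k = 2^k * 6^k := by
        push_cast
        rw [← mul_pow]
        norm_num
      have hp2 : (0:ℝ) < 2^k := by positivity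
      calc ‖(cpath z k : ℂ)‖ ≤ (k:ℝ) := h1
        _ ≤ (3/4:ℝ)^(0+1) * ((6:ℝ)*(((0:ℕ):ℝ)+2))^k := by
            rw [h12]
            nlinarith
  | succ n ih =>
    intro z hz k hk
    match k with
    | 0 =>
      rw [if_pos rfl, cpath_zero, zpoly_succ, Zop_at_zero]
      simp
    | (m+1) =>
      rw [if_neg (by omega), zpoly_succ]
      have hnn : ∀ j : ℕ, (0:ℝ) ≤ (if j = 0 then 0 else (3/4:ℝ)^(n+1) * ((6:ℝ)*((n:ℝ)+2))^j) := by
        intro j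
        by_cases h : j = 0 <;> simp [h] <;> positivity
      have hb := Zop_bound (g := zpoly (n+1)) hz hk
        (fun j => if j = 0 then 0 else (3/4:ℝ)^(n+1) * ((6:ℝ)*((n:ℝ)+2))^j)
        hnn (fun j hj => ih z hz j (by omega))
      set x : ℝ := (6:ℝ)*((n:ℝ)+2) with hxdef
      have hx0 : (0:ℝ) ≤ x := by positivity
      have hx2 : (2:ℝ) ≤ x := by rw [hxdef]; nlinarith [(Nat.cast_nonneg n : (0:ℝ) ≤ (n:ℝ))]
      have hsum : ∑ j ∈ Finset.range (m+1),
          (if j = 0 then 0 else (3/4:ℝ)^(n+1) * ((6:ℝ)*((n:ℝ)+2))^j)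
          ≤ (3/4:ℝ)^(n+1) * (2 * x^m) := by
        have step1 : ∑ j ∈ Finset.range (m+1),
            (if j = 0 then 0 else (3/4:ℝ)^(n+1) * ((6:ℝ)*((n:ℝ)+2))^j)
            ≤ ∑ j ∈ Finset.range (m+1), (3/4:ℝ)^(n+1) * x^j := by
          apply Finset.sum_le_sum
          intro j _
          by_cases h : j = 0
          · rw [if_pos h]; positivity
          · rw [if_neg h]
        have step2 : ∑ j ∈ Finset.range (m+1), (3/4:ℝ)^(n+1) * x^j
            = (3/4:ℝ)^(n+1) * ∑ j ∈ Finset.range (m+1), x^j := by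
          rw [Finset.mul_sum]
        calc _ ≤ _ := step1
          _ = _ := step2
          _ ≤ (3/4:ℝ)^(n+1) * (2 * x^m) := by
            apply mul_le_mul_of_nonneg_left (mygeom_le x hx2 m)
            positivity
      have hb' : ‖Zop (zpoly (n+1)) (cpath z (m+1))‖ ≤
          (3/4) * (if (m+1) = 0 then (0:ℝ) else (3/4:ℝ)^(n+1) * ((6:ℝ)*((n:ℝ)+2))^(m+1))
          + 2 * ∑ j ∈ Finset.range (m+1),
              (if j = 0 then 0 else (3/4:ℝ)^(n+1) * ((6:ℝ)*((n:ℝ)+2))^j) := hb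
      rw [if_neg (by omega : ¬ (m+1 = 0))] at hb'
      -- final arithmetic
      set y : ℝ := (6:ℝ)*(((n:ℕ):ℝ)+3) with hydef
      have hyx : y = x + 6 := by rw [hydef, hxdef]; ring
      have hy0 : (0:ℝ) ≤ y := by rw [hyx]; linarith
      have hxy : x ≤ y := by rw [hyx]; linarith
      have hxmy : x^m ≤ y^m := pow_le_pow_left₀ hx0 hxy m
      have hP : (0:ℝ) < (3/4:ℝ)^(n+1) := by positivity
      have key : (3/4:ℝ) * ((3/4:ℝ)^(n+1) * x^(m+1)) + 2 * ((3/4:ℝ)^(n+1) * (2 * x^m))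
          ≤ (3/4:ℝ)^(n+1+1) * y^(m+1) := by
        have e1 : x^(m+1) = x^m * x := by rw [pow_succ]
        have e2 : y^(m+1) = y^m * y := by rw [pow_succ]
        have e3 : x^m * y ≤ y^m * y := mul_le_mul_of_nonneg_right hxmy hy0
        have e4 : (0:ℝ) ≤ x^m := by positivity
        have e5 : x^m * y = x^m * x + 6 * x^m := by rw [hyx]; ring
        have e6 : x^m * x + 6 * x^m ≤ y^m * y := by linarith
        have e7 := mul_le_mul_of_nonneg_left e6 (le_of_lt hP)
        have e8 : (0:ℝ) ≤ (3/4:ℝ)^(n+1) * x^m := mul_nonneg (le_of_lt hP) e4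
        have e9 : (3/4:ℝ)^(n+1+1) = (3/4)^(n+1) * (3/4) := pow_succ _ _
        rw [e1, e2, e9]
        nlinarith [e7, e8]
      have hfin : ‖Zop (zpoly (n+1)) (cpath z (m+1))‖ ≤ (3/4:ℝ)^(n+1+1) * y^(m+1) := by
        calc ‖Zop (zpoly (n+1)) (cpath z (m+1))‖
            ≤ (3/4) * ((3/4:ℝ)^(n+1) * x^(m+1)) + 2 * ∑ j ∈ Finset.range (m+1),
                (if j = 0 then 0 else (3/4:ℝ)^(n+1) * ((6:ℝ)*((n:ℝ)+2))^j) := hb'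
          _ ≤ (3/4) * ((3/4:ℝ)^(n+1) * x^(m+1)) + 2 * ((3/4:ℝ)^(n+1) * (2 * x^m)) := by
              linarith
          _ ≤ (3/4:ℝ)^(n+1+1) * y^(m+1) := key
      calc ‖Zop (zpoly (n+1)) (cpath z (m+1))‖ ≤ (3/4:ℝ)^(n+1+1) * y^(m+1) := hfin
        _ = (3/4:ℝ)^(n+1+1) * ((6:ℝ)*((((n+1):ℕ):ℝ)+2))^(m+1) := by
            rw [hydef]
            push_cast
            ring_nf

lemma summable_poly_geom (K : ℕ) : Summable (fun n : ℕ => ((n:ℝ)+2)^K * (9/16)^n) := by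
  have base := summable_pow_mul_geometric_of_norm_lt_one (R := ℝ) K (r := 9/16)
    (by rw [Real.norm_eq_abs, _root_.abs_of_nonneg (by norm_num : (0:ℝ) ≤ 9/16)]; norm_num)
  have s2 := (summable_nat_add_iff 2).mpr base
  have s3 := s2.mul_left ((16/9:ℝ)^2)
  refine s3.congr fun n => ?_
  have c : (16/9:ℝ)^2 * (9/16)^2 = 1 := by norm_num
  push_cast
  calc (16/9:ℝ)^2 * (((n:ℝ)+2)^K * (9/16)^(n+2))
      = (((n:ℝ)+2)^K * (9/16)^n) * ((16/9:ℝ)^2 * (9/16)^2) := by rw [pow_add]; ring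
    _ = ((n:ℝ)+2)^K * (9/16)^n := by rw [c, mul_one]

lemma sq_growth_bound (L n : ℕ) (y : ℝ) (hy : 0 ≤ y) :
    ((3/4:ℝ)^(n+1) * (6*y)^L)^2 ≤ (36:ℝ)^L * (y^(2*L) * (9/16)^n) := by
  have A : ((3/4:ℝ)^(n+1))^2 = ((9/16:ℝ))^(n+1) := by
    rw [← pow_mul, mul_comm, pow_mul]
    norm_num
  have B : (((6:ℝ)*y)^L)^2 = (36:ℝ)^L * y^(2*L) := by
    rw [← pow_mul, mul_comm L 2, pow_mul, mul_pow]
    have : ((6:ℝ))^2 = 36 := by norm_num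
    rw [this, mul_pow, ← pow_mul]
  have C : ((9/16:ℝ))^(n+1) ≤ (9/16:ℝ)^n := by
    rw [pow_succ]
    nlinarith [pow_nonneg (by norm_num : (0:ℝ) ≤ 9/16) n]
  calc ((3/4:ℝ)^(n+1) * (6*y)^L)^2 = ((3/4:ℝ)^(n+1))^2 * (((6:ℝ)*y)^L)^2 := by rw [mul_pow]
    _ = ((9/16:ℝ))^(n+1) * ((36:ℝ)^L * y^(2*L)) := by rw [A, B]
    _ ≤ (9/16:ℝ)^n * ((36:ℝ)^L * y^(2*L)) := by
        apply mul_le_mul_of_nonneg_right C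
        positivity
    _ = (36:ℝ)^L * (y^(2*L) * (9/16)^n) := by ring

lemma zpoly_l2 (z : GaussianInt) (hz : 0 ≤ z.re) :
    Summable (fun n : ℕ => ‖zpoly n z‖^2) := by
  rw [← summable_nat_add_iff 1]
  have hb : ∀ n : ℕ, ‖zpoly (n+1) z‖ ≤ (3/4:ℝ)^(n+1) * ((6:ℝ)*((n:ℝ)+2))^(cpathLen z) := by
    intro n
    have h := zpoly_growth n z hz (cpathLen z) le_rfl
    rw [cpath_last] at h
    split_ifs at h with hL
    · calc ‖zpoly (n+1) z‖ ≤ 0 := h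
        _ ≤ _ := by positivity
    · exact h
  apply Summable.of_nonneg_of_le (f := fun n : ℕ => (36:ℝ)^(cpathLen z)
      * (((n:ℝ)+2)^(2*(cpathLen z)) * (9/16)^n)) (fun n => by positivity)
  · intro n
    have h1 := hb n
    have h2 : ‖zpoly (n+1) z‖^2 ≤ ((3/4:ℝ)^(n+1) * ((6:ℝ)*((n:ℝ)+2))^(cpathLen z))^2 := by
      exact pow_le_pow_left₀ (_root_.norm_nonneg (zpoly (n+1) z)) h1 2
    calc ‖zpoly (n+1) z‖^2 ≤ _ := h2
      _ ≤ (36:ℝ)^(cpathLen z) * ((((n:ℝ)+2))^(2*(cpathLen z)) * (9/16)^n) :=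
        sq_growth_bound (cpathLen z) n ((n:ℝ)+2) (by positivity)
  · exact (summable_poly_geom (2*(cpathLen z))).mul_left _

lemma amgm_norm (a b : ℝ) : a * b ≤ (a^2 + b^2)/2 := by nlinarith [sq_nonneg (a - b)]

lemma l2_mul_summable {a b : ℕ → ℂ} (ha : Summable (fun n => ‖a n‖^2))
    (hb : Summable (fun n => ‖b n‖^2)) : Summable (fun n => ‖a n‖ * ‖b n‖) := by
  apply Summable.of_nonneg_of_le (fun n => by positivity)
    (fun n => amgm_norm ‖a n‖ ‖b n‖)
  apply Summable.div_const
  exact ha.add hb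

lemma shift_l2 {u : ℕ → ℂ} (hu : Summable (fun n => ‖u n‖^2)) (n : ℕ) :
    Summable (fun m => ‖u (n+m)‖^2) := by
  have := (summable_nat_add_iff n).mpr hu
  refine this.congr fun m => ?_
  rw [Nat.add_comm]

lemma conj_mul_self (z : ℂ) : (starRingEnd ℂ) z * z = ((‖z‖^2 : ℝ) : ℂ) := by
  rw [mul_comm, Complex.mul_conj, Complex.normSq_eq_norm_sq]

lemma contraction_key (sc : ℕ → ℂ)
    (hsc : Summable (fun n => ‖sc n‖^2))
    (hM : ∀ fc : ℕ → ℂ, Summable (fun n : ℕ => ‖fc n‖ ^ 2) →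
      Summable (fun n : ℕ => ‖convC sc fc n‖ ^ 2) ∧
      ∑' n : ℕ, ‖convC sc fc n‖ ^ 2 ≤ ∑' n : ℕ, ‖fc n‖ ^ 2)
    (u : ℕ → ℂ) (hu : Summable (fun n => ‖u n‖^2)) :
    Summable (fun n => ‖∑' m, sc m * u (n+m)‖^2) ∧
    ∑' n, ‖∑' m, sc m * u (n+m)‖^2 ≤ ∑' n, ‖u n‖^2 := by
  have habsn : ∀ n : ℕ, Summable (fun m => ‖sc m * u (n+m)‖) := by
    intro n
    have h := l2_mul_summable hsc (shift_l2 hu n)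
    refine h.congr fun m => ?_
    rw [norm_mul]
  have habs : ∀ n : ℕ, Summable (fun m => sc m * u (n+m)) :=
    fun n => (habsn n).of_norm
  set v : ℕ → ℂ := fun n => ∑' m, sc m * u (n+m) with hv
  have hU0 : (0:ℝ) ≤ ∑' n, ‖u n‖^2 := tsum_nonneg (fun n => by positivity)
  -- main estimate on partial sums
  have main : ∀ N : ℕ, ∑ n ∈ Finset.range N, ‖v n‖^2 ≤ ∑' n, ‖u n‖^2 := by
    intro N
    set c : ℕ → ℂ := fun n => if n < N then (starRingEnd ℂ) (v n) else 0 with hc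
    have hc0 : ∀ n, N ≤ n → c n = 0 := by
      intro n hn
      rw [hc]
      simp only [if_neg (by omega : ¬ n < N)]
    have hc2 : Summable (fun n => ‖c n‖^2) := by
      apply (summable_nat_add_iff N).mp
      refine summable_zero.congr fun n => ?_
      rw [hc0 (n+N) (by omega)]
      simp
    obtain ⟨hw2, hwle⟩ := hM c hc2
    set w : ℕ → ℂ := fun k => convC sc c k with hw
    -- the kernel function
    set h : ℕ → ℕ → ℂ := fun n k => if n ≤ k then c n * sc (k-n) * u k else 0 with hh
    have hinj : ∀ n : ℕ, Function.Injective (fun m : ℕ => n + m) := by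
      intro n a b hab
      have : n + a = n + b := hab
      omega
    have hsupp : ∀ n : ℕ, ∀ k ∉ Set.range (fun m : ℕ => n + m), h n k = 0 := by
      intro n k hk
      have : ¬ n ≤ k := by
        intro hle
        exact hk ⟨k - n, by show n + (k - n) = k; omega⟩
      rw [hh]
      simp only [if_neg this]
    have hcomp : ∀ n : ℕ, (fun m => h n (n + m)) = fun m => c n * (sc m * u (n+m)) := by
      intro n
      funext m
      rw [hh]
      simp only [if_pos (by omega : n ≤ n + m)]
      have : n + m - n = m := by omega
      rw [this]
      ring
    have hsum_h : ∀ n : ℕ, Summable (h n) := by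
      intro n
      rw [← Function.Injective.summable_iff (hinj n) (hsupp n)]
      show Summable ((h n) ∘ (fun m => n + m))
      have : (h n) ∘ (fun m => n + m) = fun m => c n * (sc m * u (n+m)) := hcomp n
      rw [this]
      exact (habs n).mul_left (c n)
    have htsum_h : ∀ n : ℕ, ∑' k, h n k = c n * v n := by
      intro n
      rw [← Function.Injective.tsum_eq (hinj n)
        (Function.support_subset_iff'.mpr (hsupp n))]
      show ∑' m, h n (n + m) = _
      rw [show (fun m => h n (n + m)) = fun m => c n * (sc m * u (n+m)) from hcomp n]
      rw [tsum_mul_left]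
    -- pointwise : ∑_{n<N} h n k = u k * w k
    have hpt : ∀ k : ℕ, ∑ n ∈ Finset.range N, h n k = u k * w k := by
      intro k
      have e0 : w k = ∑ n ∈ Finset.range (k+1), sc (k-n) * c n := by
        show convC sc c k = _
        unfold convC
        conv_lhs => rw [← Finset.sum_range_reflect (fun m => sc m * c (k - m)) (k+1)]
        apply Finset.sum_congr rfl
        intro j hj
        rw [Finset.mem_range] at hj
        have e2 : k + 1 - 1 - j = k - j := by omega
        rw [e2]
        have e1 : k - (k - j) = j := by omega
        rw [e1]
      set M := max N (k+1) with hM'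
      have eL : ∑ n ∈ Finset.range N, h n k = ∑ n ∈ Finset.range M, h n k := by
        apply Finset.sum_subset (Finset.range_subset_range.mpr (by omega))
        intro n _ hn
        rw [Finset.mem_range, not_lt] at hn
        show (if n ≤ k then c n * sc (k-n) * u k else 0) = 0
        by_cases hnk : n ≤ k
        · rw [if_pos hnk, hc0 n hn]; ring
        · rw [if_neg hnk]
      have hsub : ∑ n ∈ Finset.range (k+1), h n k = ∑ n ∈ Finset.range M, h n k := by
        apply Finset.sum_subset (Finset.range_subset_range.mpr (by omega : k+1 ≤ M))
        intro x _hx hxk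
        rw [Finset.mem_range] at hxk
        show (if x ≤ k then c x * sc (k-x) * u k else 0) = 0
        rw [if_neg (by omega : ¬ x ≤ k)]
      have eR : u k * w k = ∑ n ∈ Finset.range (k+1), h n k := by
        rw [e0, Finset.mul_sum]
        apply Finset.sum_congr rfl
        intro n hn
        rw [Finset.mem_range] at hn
        show u k * (sc (k-n) * c n) = (if n ≤ k then c n * sc (k-n) * u k else 0)
        rw [if_pos (by omega : n ≤ k)]
        ring
      rw [eL, eR, hsub]
    -- identity : (partial sum : ℂ) = ∑' k, u k * w k
    have hid : ((∑ n ∈ Finset.range N, ‖v n‖^2 : ℝ) : ℂ) = ∑' k, u k * w k := by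
      have e1 : ∑' (k : ℕ), u k * w k = ∑' (k : ℕ), ∑ n ∈ Finset.range N, h n k := by
        apply tsum_congr
        intro k
        rw [hpt k]
      have e2 : ∑' (k : ℕ), ∑ n ∈ Finset.range N, h n k
          = ∑ n ∈ Finset.range N, ∑' k, h n k :=
        Summable.tsum_finsetSum (fun n _ => hsum_h n)
      rw [e1, e2]
      rw [Finset.sum_congr rfl (fun n hn => htsum_h n)]
      rw [Complex.ofReal_sum]
      apply Finset.sum_congr rfl
      intro n hn
      rw [Finset.mem_range] at hn
      rw [hc]
      simp only [if_pos hn]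
      rw [conj_mul_self]
    -- bound the tsum
    have huw : Summable (fun k => ‖u k * w k‖) := by
      have h := l2_mul_summable hu hw2
      refine h.congr fun k => ?_
      rw [norm_mul]
    have hb1 : ‖∑' k, u k * w k‖ ≤ ∑' k, ‖u k‖ * ‖w k‖ := by
      refine le_trans (norm_tsum_le_tsum_norm huw) ?_
      apply le_of_eq
      apply tsum_congr
      intro k
      rw [norm_mul]
    have hb2 : ∑' k, ‖u k‖ * ‖w k‖ ≤ ((∑' k, ‖u k‖^2) + (∑' k, ‖w k‖^2))/2 := by
      have hsum2 : Summable (fun k => (‖u k‖^2 + ‖w k‖^2)/2) := (hu.add hw2).div_const 2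
      calc ∑' k, ‖u k‖ * ‖w k‖ ≤ ∑' k, (‖u k‖^2 + ‖w k‖^2)/2 := by
            apply Summable.tsum_le_tsum (fun k => amgm_norm _ _) _ hsum2
            exact l2_mul_summable hu hw2
        _ = ((∑' k, ‖u k‖^2) + (∑' k, ‖w k‖^2))/2 := by
            rw [tsum_div_const, Summable.tsum_add hu hw2]
    have hcT : ∑' n, ‖c n‖^2 = ∑ n ∈ Finset.range N, ‖v n‖^2 := by
      rw [tsum_eq_sum (s := Finset.range N) (fun n hn => by
        rw [Finset.mem_range, not_lt] at hn
        rw [hc0 n hn]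
        simp)]
      apply Finset.sum_congr rfl
      intro n hn
      rw [Finset.mem_range] at hn
      rw [hc]
      simp only [if_pos hn]
      rw [RCLike.norm_conj]
    have hTnn : (0:ℝ) ≤ ∑ n ∈ Finset.range N, ‖v n‖^2 :=
      Finset.sum_nonneg (fun n _ => by positivity)
    have habs_eq : ∑ n ∈ Finset.range N, ‖v n‖^2 = ‖((∑ n ∈ Finset.range N, ‖v n‖^2 : ℝ) : ℂ)‖ := by
      rw [Complex.norm_real, Real.norm_eq_abs, _root_.abs_of_nonneg hTnn]
    have : ∑ n ∈ Finset.range N, ‖v n‖^2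
        ≤ ((∑' k, ‖u k‖^2) + (∑ n ∈ Finset.range N, ‖v n‖^2))/2 := by
      calc ∑ n ∈ Finset.range N, ‖v n‖^2 = ‖((∑ n ∈ Finset.range N, ‖v n‖^2 : ℝ) : ℂ)‖ := habs_eq
        _ = ‖∑' k, u k * w k‖ := by rw [hid]
        _ ≤ ∑' k, ‖u k‖ * ‖w k‖ := hb1
        _ ≤ ((∑' k, ‖u k‖^2) + (∑' k, ‖w k‖^2))/2 := hb2
        _ ≤ ((∑' k, ‖u k‖^2) + (∑ n ∈ Finset.range N, ‖v n‖^2))/2 := by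
            rw [← hcT]
            linarith [hwle]
    linarith
  constructor
  · exact summable_of_sum_range_le (fun n => by positivity) main
  · exact Summable.tsum_le_of_sum_range_le
      (summable_of_sum_range_le (fun n => by positivity) main) main

lemma Zop_mul_left (a : ℂ) (f : GaussianInt → ℂ) (z : GaussianInt) :
    Zop (fun w => a * f w) z = a * Zop f z := by
  unfold Zop discInt
  rw [mul_add, Finset.mul_sum]
  congr 1
  · ring
  · apply Finset.sum_congr rfl
    intro k _
    ring

lemma Zop_hasSum {g : ℕ → GaussianInt → ℂ} {G : GaussianInt → ℂ} {z : GaussianInt}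
    (hgs : ∀ j, j ≤ cpathLen z → HasSum (fun m => g m (cpath z j)) (G (cpath z j))) :
    HasSum (fun m => Zop (g m) z) (Zop G z) := by
  have h0 : HasSum (fun m => g m 0) (G 0) := by
    have := hgs 0 (Nat.zero_le _)
    rwa [cpath_zero] at this
  have hz : HasSum (fun m => g m z) (G z) := by
    have := hgs (cpathLen z) le_rfl
    rwa [cpath_last] at this
  have hsum : HasSum (fun m => (g m 0 - g m z)/2
      + ∑ k ∈ Finset.range (cpathLen z), ((g m (cpath z k) + g m (cpath z (k+1)))/2)
          * ((cpath z (k+1) : ℂ) - (cpath z k : ℂ)))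
      ((G 0 - G z)/2 + ∑ k ∈ Finset.range (cpathLen z), ((G (cpath z k) + G (cpath z (k+1)))/2)
          * ((cpath z (k+1) : ℂ) - (cpath z k : ℂ))) := by
    apply HasSum.add
    · exact (h0.sub hz).div_const 2
    · apply hasSum_sum
      intro k hk
      rw [Finset.mem_range] at hk
      exact (((hgs k (by omega)).add (hgs (k+1) (by omega))).div_const 2).mul_right _
  exact hsum

lemma iter_hasSum {s : GaussianInt → ℂ} {sc : ℕ → ℂ} (hs : MemH2 s sc) :
    ∀ (n : ℕ) (z : GaussianInt), 0 ≤ z.re →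
      HasSum (fun m => sc m * zpoly (m + n) z) ((Zop^[n] s) z) := by
  intro n
  induction n with
  | zero =>
    intro z hz
    have := hs.2 z hz
    simpa using this
  | succ n ih =>
    intro z hz
    have key : HasSum (fun m => Zop (fun w => sc m * zpoly (m + n) w) z)
        (Zop (Zop^[n] s) z) :=
      Zop_hasSum (fun j _hj => ih (cpath z j) (cpath_re_nonneg hz j))
    rw [Function.iterate_succ_apply']
    have e : (fun m => Zop (fun w => sc m * zpoly (m + n) w) z)
        = fun m => sc m * zpoly (m + (n+1)) z := by
      funext m
      rw [Zop_mul_left]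
      congr 1
      show Zop (zpoly (m+n)) z = zpoly ((m+n)+1) z
      rw [zpoly_succ]
    exact e ▸ key

lemma mul_conj_self (z : ℂ) : z * (starRingEnd ℂ) z = ((‖z‖^2 : ℝ) : ℂ) := by
  rw [Complex.mul_conj, Complex.normSq_eq_norm_sq]

lemma l2_finsum {ι : Type*} [DecidableEq ι] (t : Finset ι) (f : ι → ℕ → ℂ)
    (hf : ∀ j ∈ t, Summable (fun n => ‖f j n‖^2)) :
    Summable (fun n => ‖∑ j ∈ t, f j n‖^2) := by
  induction t using Finset.induction_on with
  | empty =>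
    refine summable_zero.congr fun n => ?_
    simp
  | @insert a t ha ih =>
    have h1 : Summable (fun n => ‖f a n‖^2) := hf a (Finset.mem_insert_self a t)
    have h2 : Summable (fun n => ‖∑ j ∈ t, f j n‖^2) :=
      ih (fun j hj => hf j (Finset.mem_insert_of_mem hj))
    apply Summable.of_nonneg_of_le (fun n => by positivity)
      (f := fun n => 2*‖f a n‖^2 + 2*‖∑ j ∈ t, f j n‖^2)
    · intro n
      rw [Finset.sum_insert ha]
      have hn := norm_add_le (f a n) (∑ j ∈ t, f j n)
      have h3 := norm_nonneg (f a n + ∑ j ∈ t, f j n)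
      nlinarith [norm_nonneg (f a n), norm_nonneg (∑ j ∈ t, f j n),
        sq_nonneg (‖f a n‖ - ‖∑ j ∈ t, f j n‖)]
    · exact (h1.mul_left 2).add (h2.mul_left 2)
/-- If `s ∈ H₂(Λ₊)` and the multiplication operator `M_s f = s ⊙ f` is
everywhere defined and a contraction on `H₂(Λ₊)`, then `s` is a discrete analytic Schur
function. -/
theorem stmt15 (s : GaussianInt → ℂ) (sc : ℕ → ℂ) (hs : MemH2 s sc)
    (hM : ∀ fc : ℕ → ℂ, Summable (fun n : ℕ => ‖fc n‖ ^ 2) →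
      Summable (fun n : ℕ => ‖convC sc fc n‖ ^ 2) ∧
      ∑' n : ℕ, ‖convC sc fc n‖ ^ 2 ≤ ∑' n : ℕ, ‖fc n‖ ^ 2) :
    IsSchur s := by
  have hsc : Summable (fun n => ‖sc n‖^2) := hs.1
  -- Part 1 : s is discrete analytic on the right half plane
  have hDA : DAnalyticOn s := by
    intro z hz
    have hz1 : 0 ≤ (z+1).re := by rw [add_one_re]; omega
    have hz1i : 0 ≤ (z+1+ii).re := by rw [add_ii_re, add_one_re]; omega
    have hzi : 0 ≤ (z+ii).re := by rw [add_ii_re]; omega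
    have H0 := hs.2 z hz
    have H1 := hs.2 (z+1+ii) hz1i
    have H2 := hs.2 (z+1) hz1
    have H3 := hs.2 (z+ii) hzi
    have A := (H1.sub H0).div_const (1 + Complex.I)
    have B := (H2.sub H3).div_const (1 - Complex.I)
    have e : (fun n => (sc n * zpoly n (z+1+ii) - sc n * zpoly n z)/(1+Complex.I))
        = (fun n => (sc n * zpoly n (z+1) - sc n * zpoly n (z+ii))/(1-Complex.I)) := by
      funext n
      rw [div_eq_div_iff one_add_I_ne one_sub_I_ne]
      have hCR := CR_cross (zpoly_DA n) hz
      linear_combination sc n * hCR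
    rw [e] at A
    exact A.unique B
  -- representation of iterates as tsums, and part 2
  have hval : ∀ (z : GaussianInt), 0 ≤ z.re → ∀ n : ℕ,
      (∑' m, sc m * zpoly (n+m) z) = (Zop^[n] s) z := by
    intro z hz n
    have hhs := iter_hasSum hs n z hz
    have e : (fun m => sc m * zpoly (m+n) z) = fun m => sc m * zpoly (n+m) z := by
      funext m
      rw [Nat.add_comm]
    exact (e ▸ hhs).tsum_eq
  have hpart2 : ∀ (z : GaussianInt), 0 ≤ z.re →
      Summable (fun n : ℕ => ‖(Zop^[n] s) z‖ ^ 2) := by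
    intro z hz
    have hu := zpoly_l2 z hz
    have hkey := contraction_key sc hsc hM (fun k => zpoly k z) hu
    refine hkey.1.congr fun n => ?_
    show ‖∑' m, sc m * zpoly (n+m) z‖^2 = ‖(Zop^[n] s) z‖^2
    rw [hval z hz n]
  refine ⟨hDA, hpart2, ?_⟩
  -- Part 3 : positivity of the kernel
  intro mm w hw
  have hp2 : ∀ j : Fin mm, Summable (fun n => ‖zpoly n (w j)‖^2) :=
    fun j => zpoly_l2 (w j) (hw j)
  have hq2 : ∀ j : Fin mm, Summable (fun n => ‖(Zop^[n] s) (w j)‖^2) :=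
    fun j => hpart2 (w j) (hw j)
  have hP : ∀ j k : Fin mm,
      Summable (fun n => zpoly n (w j) * (starRingEnd ℂ) (zpoly n (w k))) := by
    intro j k
    apply Summable.of_norm
    refine (l2_mul_summable (hp2 j) (hp2 k)).congr fun n => ?_
    rw [norm_mul, RCLike.norm_conj]
  have hQ : ∀ j k : Fin mm,
      Summable (fun n => (Zop^[n] s) (w j) * (starRingEnd ℂ) ((Zop^[n] s) (w k))) := by
    intro j k
    apply Summable.of_norm
    refine (l2_mul_summable (hq2 j) (hq2 k)).congr fun n => ?_
    rw [norm_mul, RCLike.norm_conj]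
  have hFsum : ∀ j k : Fin mm, Summable (fun n =>
      zpoly n (w j) * (starRingEnd ℂ) (zpoly n (w k))
        - (Zop^[n] s) (w j) * (starRingEnd ℂ) ((Zop^[n] s) (w k))) :=
    fun j k => (hP j k).sub (hQ j k)
  rw [Matrix.posSemidef_iff_dotProduct_mulVec]
  constructor
  · -- Hermitian
    show _ = _
    ext j k
    rw [Matrix.conjTranspose_apply, Matrix.of_apply, Matrix.of_apply]
    show star (schurKer s (w j) (w k)) = schurKer s (w k) (w j)
    unfold schurKer
    rw [tsum_star]
    apply tsum_congr
    intro n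
    simp only [starRingEnd_apply, star_sub, star_mul, star_star]
  · -- quadratic form
    intro x
    set A : ℕ → ℂ := fun n => ∑ j, (starRingEnd ℂ) (x j) * zpoly n (w j) with hA
    set B : ℕ → ℂ := fun n => ∑ j, (starRingEnd ℂ) (x j) * (Zop^[n] s) (w j) with hB
    have hA2 : Summable (fun n => ‖A n‖^2) := by
      apply l2_finsum
      intro j _
      refine ((hp2 j).mul_left (‖(starRingEnd ℂ) (x j)‖^2)).congr fun n => ?_
      rw [norm_mul, mul_pow]
    have hBn : ∀ n : ℕ, HasSum (fun m2 => sc m2 * A (n+m2)) (B n) := by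
      intro n
      have base : ∀ j : Fin mm, HasSum
          (fun m2 => (starRingEnd ℂ) (x j) * (sc m2 * zpoly (m2+n) (w j)))
          ((starRingEnd ℂ) (x j) * (Zop^[n] s) (w j)) :=
        fun j => (iter_hasSum hs n (w j) (hw j)).mul_left _
      have hsum := hasSum_sum (s := Finset.univ) (fun j _ => base j)
      have e : (fun m2 => ∑ j, (starRingEnd ℂ) (x j) * (sc m2 * zpoly (m2+n) (w j)))
          = fun m2 => sc m2 * A (n+m2) := by
        funext m2
        rw [hA]
        show _ = sc m2 * ∑ j, (starRingEnd ℂ) (x j) * zpoly (n+m2) (w j)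
        rw [Finset.mul_sum]
        apply Finset.sum_congr rfl
        intro j _
        rw [Nat.add_comm n m2]
        ring
      exact e ▸ hsum
    have hkeyA := contraction_key sc hsc hM A hA2
    have eB : (fun n => ‖∑' m2, sc m2 * A (n+m2)‖^2) = fun n => ‖B n‖^2 := by
      funext n
      rw [(hBn n).tsum_eq]
    have hB2 : Summable (fun n => ‖B n‖^2) := eB ▸ hkeyA.1
    have hBle : ∑' n, ‖B n‖^2 ≤ ∑' n, ‖A n‖^2 := by
      have h2 := hkeyA.2
      rwa [eB] at h2
    -- expand the quadratic form
    have hterm : ∀ j k : Fin mm, (starRingEnd ℂ) (x j) * (schurKer s (w k) (w j) * x k)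
        = ∑' n, ((starRingEnd ℂ) (x j) * x k) *
            (zpoly n (w j) * (starRingEnd ℂ) (zpoly n (w k))
              - (Zop^[n] s) (w j) * (starRingEnd ℂ) ((Zop^[n] s) (w k))) := by
      intro j k
      rw [tsum_mul_left]
      unfold schurKer
      ring
    have hE : dotProduct (star x)
        ((Matrix.of fun j k : Fin mm => schurKer s (w k) (w j)).mulVec x)
        = ∑ j, ∑ k, (starRingEnd ℂ) (x j) * (schurKer s (w k) (w j) * x k) := by
      show (∑ j, (star x) j * ∑ k, (Matrix.of fun j k : Fin mm => schurKer s (w k) (w j)) j k * x k) = _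
      apply Finset.sum_congr rfl
      intro j _
      rw [Finset.mul_sum]
      rfl
    have hg : ∀ j k : Fin mm, Summable (fun n => ((starRingEnd ℂ) (x j) * x k) *
        (zpoly n (w j) * (starRingEnd ℂ) (zpoly n (w k))
          - (Zop^[n] s) (w j) * (starRingEnd ℂ) ((Zop^[n] s) (w k)))) :=
      fun j k => (hFsum j k).mul_left _
    have hswap : ∑ j, ∑ k, (starRingEnd ℂ) (x j) * (schurKer s (w k) (w j) * x k)
        = ∑' n, ∑ j, ∑ k, ((starRingEnd ℂ) (x j) * x k) *
            (zpoly n (w j) * (starRingEnd ℂ) (zpoly n (w k))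
              - (Zop^[n] s) (w j) * (starRingEnd ℂ) ((Zop^[n] s) (w k))) := by
      rw [Summable.tsum_finsetSum (fun j _ => summable_sum (fun k _ => hg j k))]
      apply Finset.sum_congr rfl
      intro j _
      rw [Summable.tsum_finsetSum (fun k _ => hg j k)]
      apply Finset.sum_congr rfl
      intro k _
      exact hterm j k
    have hABn : ∀ n : ℕ, (∑ j, ∑ k, ((starRingEnd ℂ) (x j) * x k) *
        (zpoly n (w j) * (starRingEnd ℂ) (zpoly n (w k))
          - (Zop^[n] s) (w j) * (starRingEnd ℂ) ((Zop^[n] s) (w k))))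
        = ((‖A n‖^2 - ‖B n‖^2 : ℝ) : ℂ) := by
      intro n
      have e2 : ∑ k, x k * (starRingEnd ℂ) (zpoly n (w k)) = (starRingEnd ℂ) (A n) := by
        rw [hA]
        show _ = (starRingEnd ℂ) (∑ j, (starRingEnd ℂ) (x j) * zpoly n (w j))
        rw [map_sum]
        apply Finset.sum_congr rfl
        intro k _
        rw [map_mul, Complex.conj_conj]
      have e3 : ∑ k, x k * (starRingEnd ℂ) ((Zop^[n] s) (w k)) = (starRingEnd ℂ) (B n) := by
        rw [hB]
        show _ = (starRingEnd ℂ) (∑ j, (starRingEnd ℂ) (x j) * (Zop^[n] s) (w j))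
        rw [map_sum]
        apply Finset.sum_congr rfl
        intro k _
        rw [map_mul, Complex.conj_conj]
      have e1 : ∑ j, ∑ k, ((starRingEnd ℂ) (x j) * x k) *
          (zpoly n (w j) * (starRingEnd ℂ) (zpoly n (w k))
            - (Zop^[n] s) (w j) * (starRingEnd ℂ) ((Zop^[n] s) (w k)))
          = (∑ j, (starRingEnd ℂ) (x j) * zpoly n (w j)) * (∑ k, x k * (starRingEnd ℂ) (zpoly n (w k)))
            - (∑ j, (starRingEnd ℂ) (x j) * (Zop^[n] s) (w j)) * (∑ k, x k * (starRingEnd ℂ) ((Zop^[n] s) (w k))) := by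
        rw [Finset.sum_mul_sum, Finset.sum_mul_sum, ← Finset.sum_sub_distrib]
        apply Finset.sum_congr rfl
        intro j _
        rw [← Finset.sum_sub_distrib]
        apply Finset.sum_congr rfl
        intro k _
        ring
      rw [e1, e2, e3]
      have eA : (∑ j, (starRingEnd ℂ) (x j) * zpoly n (w j)) = A n := by rw [hA]
      have eBB : (∑ j, (starRingEnd ℂ) (x j) * (Zop^[n] s) (w j)) = B n := by rw [hB]
      rw [eA, eBB, mul_conj_self (A n), mul_conj_self (B n)]
      push_cast
      ring
    have hreal : Summable (fun n => ‖A n‖^2 - ‖B n‖^2) := hA2.sub hB2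
    have hofr : ∑' n, ((‖A n‖^2 - ‖B n‖^2 : ℝ) : ℂ)
        = ((∑' n, (‖A n‖^2 - ‖B n‖^2) : ℝ) : ℂ) :=
      (Complex.hasSum_ofReal.mpr hreal.hasSum).tsum_eq
    rw [hE, hswap, tsum_congr hABn, hofr]
    rw [Complex.zero_le_real]
    rw [Summable.tsum_sub hA2 hB2]
    linarith [hBle]


end
end

section
/- Let λ ∈ Λ₊ with Im λ ≥ 0, let N = Re λ + 1 and m = Im λ, and let α₋ = (1−i)/2. Let a₀, …, a_M ∈ ℂ and let p(z) = Σ_{n=0}^M a_n z^{(n)}(z) be the corresponding discrete analytic polynomial. Then p(w) = 0 for every w ∈ R_λ if and only if the polynomial Σ_{n=0}^M a_n Xⁿ ∈ ℂ[X] is divisible by X^N (X + α₋)^m. In particular, every nonzero discrete analytic polynomial vanishing on R_λ has degree at least Re λ + Im λ + 1. -/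
open Complex Finset GaussianInt

noncomputable section

/-- The rectangle `R_λ = {z ∈ Λ₊ : Re z ≤ Re λ, |Im z| ≤ |Im λ|, Im z · Im λ ≥ 0}`. -/
def RRect (l : GaussianInt) : Set GaussianInt :=
  {z | 0 ≤ z.re ∧ z.re ≤ l.re ∧ |z.im| ≤ |l.im| ∧ 0 ≤ z.im * l.im}

open Polynomial
open scoped PowerSeries

/-!
For `x, y ≥ 0` the values `z⁽ⁿ⁾(x + iy)` are the coefficients of the power series
`Gₓᵧ = (1 + t)ˣ ((1 + α₊t) / (1 + α₋t))ʸ`: along the canonical path, `z⁽ⁿ⁺¹⁾ = Z z⁽ⁿ⁾` becomes a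
power series identity which this family satisfies. So `p(x + iy) = ∑ aₙ [tⁿ] Gₓᵧ` is a pairing of
`P = ∑ aₙ Xⁿ` with `Gₓᵧ`.
Since `(1 + t) Gₓᵧ = Gₓ₊₁,ᵧ` and `(1 + α₋t) Gₓ,ᵧ₊₁ = (1 + α₊t) Gₓᵧ`, writing `P = (X + a) Q + r`
with `a = 0` resp. `a = α₋` makes the step of `p` to the right resp. upwards equal to `1` resp.
`α₊ - α₋ = i` times the value of `Q`. Hence `p` vanishes on a row of `N` points iff `p` vanishes
at its first point and `Q` on the first `N - 1`, and similarly on columns; induction turns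
vanishing on `R_λ` into divisibility of `P` by `Xᴺ (X + α₋)ᵐ`, and the degree bound follows.
-/

theorem exists_eq_X_add_C_mul_add_C {R : Type*} [CommRing R] (P : R[X]) (a : R) :
    ∃ Q r, P = (X + C a) * Q + C r := by
  refine ⟨P /ₘ (X - C (-a)), P.eval (-a), ?_⟩
  rw [show X + C a = X - C (-a) by rw [C_neg, sub_neg_eq_add], ← modByMonic_X_sub_C_eq_C_eval,
    add_comm, modByMonic_add_div]

theorem X_pow_mul_X_add_C_pow_succ_dvd_iff {R : Type*} [CommRing R] [IsDomain R] (a r : R)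
    (Q : R[X]) (n m : ℕ) :
    X ^ (n + 1) * (X + C a) ^ (m + 1) ∣ (X + C a) * Q + C r ↔
      X ^ (n + 1) ∣ (X + C a) * Q + C r ∧ X ^ (n + 1) * (X + C a) ^ m ∣ Q := by
  have hcancel : X ^ (n + 1) * (X + C a) ^ (m + 1) ∣ (X + C a) * Q ↔
      X ^ (n + 1) * (X + C a) ^ m ∣ Q := by
    rw [pow_succ (X + C a), ← mul_assoc, mul_comm _ (X + C a),
      mul_dvd_mul_iff_left (X_add_C_ne_zero a)]
  constructor
  · intro h
    obtain rfl : r = 0 := by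
      have hroot : X - C (-a) ∣ C r := by
        rw [C_neg, sub_neg_eq_add, ← dvd_add_right (dvd_mul_right _ Q)]
        exact (dvd_pow_self _ m.succ_ne_zero).trans ((dvd_mul_left _ _).trans h)
      simpa using dvd_iff_isRoot.1 hroot
    rw [C_0, add_zero] at h ⊢
    exact ⟨(dvd_mul_right _ _).trans h, hcancel.1 h⟩
  · rintro ⟨hP, hQ⟩
    obtain rfl : r = 0 := by
      have hQ0 : Q.coeff 0 = 0 := X_dvd_iff.1 ((dvd_pow_self _ n.succ_ne_zero).trans
        ((dvd_mul_right _ _).trans hQ))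
      simpa [hQ0] using X_dvd_iff.1 ((dvd_pow_self _ n.succ_ne_zero).trans hP)
    rw [C_0, add_zero]
    exact hcancel.2 hQ

theorem forall_le_succ_eq_zero_iff {M : Type*} [AddCommGroup M] {f g : ℕ → M}
    (hf : ∀ k, f (k + 1) = f k + g k) (n : ℕ) :
    (∀ k ≤ n + 1, f k = 0) ↔ f 0 = 0 ∧ ∀ k ≤ n, g k = 0 := by
  refine ⟨fun h => ⟨h 0 (Nat.zero_le _), fun k hk => ?_⟩, fun ⟨h0, hg⟩ k hk => ?_⟩
  · simpa [h k (by omega), h (k + 1) (by omega), eq_comm] using hf k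
  · induction k with
    | zero => exact h0
    | succ k ih => rw [hf, ih (by omega), hg k (by omega), add_zero]

section Pairing

variable {R : Type*} [CommRing R]

/-- `pairing F P = ∑ₙ Pₙ Fₙ`; for `F` the generating function of `z⁽ⁿ⁾(w)` it evaluates the
discrete analytic polynomial with coefficients `P` at `w`. -/
def pairing (F : R⟦X⟧) : R[X] →ₗ[R] R :=
  Polynomial.lsum fun n => LinearMap.mulRight R (PowerSeries.coeff n F)

theorem pairing_monomial (F : R⟦X⟧) (n : ℕ) (c : R) :
    pairing F (monomial n c) = c * PowerSeries.coeff n F := by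
  simp [pairing, sum_monomial_index]

theorem pairing_C (F : R⟦X⟧) (c : R) : pairing F (C c) = c * PowerSeries.constantCoeff F := by
  rw [← monomial_zero_left, pairing_monomial, PowerSeries.coeff_zero_eq_constantCoeff_apply]

theorem pairing_one_apply (P : R[X]) : pairing 1 P = P.coeff 0 := by
  induction P using Polynomial.induction_on' with
  | add p q hp hq => rw [map_add, hp, hq, coeff_add]
  | monomial n c => rcases n with _ | n <;> simp [pairing_monomial, pairing_C]

theorem pairing_sum_C_mul_X_pow (F : R⟦X⟧) (s : Finset ℕ) (a : ℕ → R) :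
    pairing F (∑ n ∈ s, C (a n) * X ^ n) = ∑ n ∈ s, a n * PowerSeries.coeff n F := by
  simp only [map_sum, C_mul_X_pow_eq_monomial, pairing_monomial]

theorem pairing_X_add_C_mul (F : R⟦X⟧) (a : R) (P : R[X]) :
    pairing F ((X + C a) * P) = pairing ((1 + PowerSeries.C a * PowerSeries.X) * F) (X * P) := by
  induction P using Polynomial.induction_on' with
  | add p q hp hq => rw [mul_add, mul_add, map_add, map_add, hp, hq]
  | monomial n c =>
    rw [add_mul, X_mul_monomial, C_mul_monomial, map_add, pairing_monomial,
      pairing_monomial, pairing_monomial, add_mul, one_mul, map_add, mul_assoc (PowerSeries.C a),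
      PowerSeries.coeff_C_mul, PowerSeries.coeff_succ_X_mul]
    ring

theorem pairing_X_add_C_mul_add_C {F F' : R⟦X⟧} {a b : R}
    (h : (1 + PowerSeries.C a * PowerSeries.X) * F' = (1 + PowerSeries.C b * PowerSeries.X) * F)
    (Q : R[X]) (r : R) :
    pairing F' ((X + C a) * Q + C r) =
      pairing F ((X + C a) * Q + C r) + (b - a) * pairing F Q := by
  have hconst : PowerSeries.constantCoeff F' = PowerSeries.constantCoeff F := by
    simpa using congrArg PowerSeries.constantCoeff h
  have hb : (X + C b) * Q = (X + C a) * Q + (b - a) • Q := by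
    rw [smul_eq_C_mul, C_sub]; ring
  rw [map_add, map_add, pairing_C, pairing_C, hconst, pairing_X_add_C_mul, h,
    ← pairing_X_add_C_mul, hb, map_add, map_smul, smul_eq_mul]
  ring

theorem forall_le_succ_pairing_eq_zero_iff [IsDomain R] {F : ℕ → R⟦X⟧} {a b : R} (hab : a ≠ b)
    (hF : ∀ k, (1 + PowerSeries.C a * PowerSeries.X) * F (k + 1) =
      (1 + PowerSeries.C b * PowerSeries.X) * F k)
    (Q : R[X]) (r : R) (n : ℕ) :
    (∀ k ≤ n + 1, pairing (F k) ((X + C a) * Q + C r) = 0) ↔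
      pairing (F 0) ((X + C a) * Q + C r) = 0 ∧ ∀ k ≤ n, pairing (F k) Q = 0 := by
  rw [forall_le_succ_eq_zero_iff fun k => pairing_X_add_C_mul_add_C (hF k) Q r]
  simp [sub_ne_zero.2 hab.symm]

end Pairing

theorem aPlus_sub_aMinus : aPlus - aMinus = I := by
  simp only [aPlus, aMinus]; ring

theorem aPlus_add_aMinus : aPlus + aMinus = 1 := by
  simp only [aPlus, aMinus]; ring

/-- The generating function `∑ₙ z⁽ⁿ⁾(x + iy) tⁿ = (1 + t)ˣ ((1 + α₊t) / (1 + α₋t))ʸ`. -/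
def genFun (x y : ℕ) : ℂ⟦X⟧ :=
  (1 + PowerSeries.X) ^ x *
    ((1 + PowerSeries.C aPlus * PowerSeries.X) * (1 + PowerSeries.C aMinus * PowerSeries.X)⁻¹) ^ y

theorem genFun_zero_zero : genFun 0 0 = 1 := by
  simp [genFun]

theorem genFun_succ_left (x y : ℕ) : genFun (x + 1) y = (1 + PowerSeries.X) * genFun x y := by
  simp only [genFun, pow_succ]; ring

theorem genFun_succ_right (x y : ℕ) :
    (1 + PowerSeries.C aMinus * PowerSeries.X) * genFun x (y + 1) =
      (1 + PowerSeries.C aPlus * PowerSeries.X) * genFun x y := by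
  set A := 1 + PowerSeries.C aPlus * PowerSeries.X
  set D := 1 + PowerSeries.C aMinus * PowerSeries.X
  have hinv : D * D⁻¹ = 1 := PowerSeries.mul_inv_cancel _ (by simp [D])
  simp only [genFun, pow_succ]
  linear_combination (1 + PowerSeries.X) ^ x * (A * D⁻¹) ^ y * A * hinv

theorem two_mul_genFun_sub_one (x y : ℕ) :
    2 * (genFun x y - 1) = PowerSeries.X * (genFun 0 0 - genFun x y +
      ∑ j ∈ range x, (genFun j 0 + genFun (j + 1) 0) +
      PowerSeries.C I * ∑ j ∈ range y, (genFun x j + genFun x (j + 1))) := by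
  induction y with
  | zero =>
    induction x with
    | zero => simp [genFun_zero_zero]
    | succ x ih =>
      simp only [range_zero, sum_empty, mul_zero, add_zero, sum_range_succ] at ih ⊢
      rw [genFun_succ_left]
      linear_combination ih
  | succ y ih =>
    have hI : PowerSeries.C I = PowerSeries.C aPlus - PowerSeries.C aMinus := by
      rw [← map_sub, aPlus_sub_aMinus]
    have hM : PowerSeries.C aMinus = 1 - PowerSeries.C aPlus := by
      rw [← map_one PowerSeries.C, ← map_sub, ← aPlus_add_aMinus, add_sub_cancel_left]
    have hstep := genFun_succ_right x y
    rw [sum_range_succ, hI, hM]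
    rw [hI, hM] at ih
    rw [hM] at hstep
    linear_combination ih + 2 * hstep

def natPt (x y : ℕ) : GaussianInt := ⟨x, y⟩

/-- `Zf(x + iy)` for `x, y ≥ 0`, with the integral taken along the canonical path. -/
def quadrantZ (f : ℕ → ℕ → ℂ) (x y : ℕ) : ℂ :=
  (f 0 0 - f x y) / 2 +
    (∑ j ∈ range x, (f j 0 + f (j + 1) 0) + I * ∑ j ∈ range y, (f x j + f x (j + 1))) / 2

theorem coeff_succ_genFun (n x y : ℕ) :
    PowerSeries.coeff (n + 1) (genFun x y) =
      quadrantZ (fun x y => PowerSeries.coeff n (genFun x y)) x y := by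
  have h := congrArg (PowerSeries.coeff (n + 1)) (two_mul_genFun_sub_one x y)
  rw [PowerSeries.coeff_succ_X_mul, ← map_ofNat PowerSeries.C 2, PowerSeries.coeff_C_mul] at h
  simp only [map_add, map_sub, map_sum, PowerSeries.coeff_C_mul, PowerSeries.coeff_one,
    Nat.add_one_ne_zero, if_false, sub_zero] at h
  rw [quadrantZ]
  linear_combination h / 2

theorem cpath_natPt (x y k : ℕ) : cpath (natPt x y) k = natPt (min k x) (min k (x + y) - x) := by
  simp only [cpath, natPt, Int.natAbs_natCast]
  congr 1
  · rcases x with _ | x <;> simp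
  · rcases y with _ | y <;> simp

theorem natPt_toComplex (x y : ℕ) : ((natPt x y : GaussianInt) : ℂ) = x + y * I := by
  simp [natPt, toComplex_def']

theorem discInt_cpath_natPt (f : GaussianInt → ℂ) (x y : ℕ) :
    discInt f (cpath (natPt x y)) (x + y) =
      (∑ j ∈ range x, (f (natPt j 0) + f (natPt (j + 1) 0)) +
        I * ∑ j ∈ range y, (f (natPt x j) + f (natPt x (j + 1)))) / 2 := by
  rw [discInt, sum_range_add, add_div, mul_sum, sum_div, sum_div]
  congr 1 <;> refine sum_congr rfl fun j hj => ?_ <;> rw [mem_range] at hj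
  · rw [cpath_natPt, cpath_natPt, natPt_toComplex, natPt_toComplex,
      show min j x = j by omega, show min (j + 1) x = j + 1 by omega,
      show min j (x + y) - x = 0 by omega, show min (j + 1) (x + y) - x = 0 by omega]
    push_cast; ring
  · rw [cpath_natPt, cpath_natPt, natPt_toComplex, natPt_toComplex,
      show min (x + j) x = x by omega, show min (x + j + 1) x = x by omega,
      show min (x + j) (x + y) - x = j by omega, show min (x + j + 1) (x + y) - x = j + 1 by omega]
    push_cast; ring

theorem Zop_natPt (f : GaussianInt → ℂ) (x y : ℕ) :
    Zop f (natPt x y) = quadrantZ (fun x y => f (natPt x y)) x y := by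
  have hlen : cpathLen (natPt x y) = x + y := by simp [cpathLen, natPt]
  rw [Zop, hlen, discInt_cpath_natPt, quadrantZ]
  rfl

theorem zpoly_natPt (n x y : ℕ) : zpoly n (natPt x y) = PowerSeries.coeff n (genFun x y) := by
  induction n generalizing x y with
  | zero => simp [zpoly, genFun]
  | succ n ih =>
    rw [zpoly, Function.iterate_succ_apply', ← zpoly, Zop_natPt, coeff_succ_genFun]
    simp only [ih]

theorem forall_le_pairing_genFun_zero_iff (n : ℕ) (P : ℂ[X]) :
    (∀ x ≤ n, pairing (genFun x 0) P = 0) ↔ X ^ (n + 1) ∣ P := by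
  induction n generalizing P with
  | zero => simp [genFun_zero_zero, pairing_one_apply, X_dvd_iff]
  | succ n ih =>
    obtain ⟨Q, r, rfl⟩ := exists_eq_X_add_C_mul_add_C P 0
    rw [forall_le_succ_pairing_eq_zero_iff zero_ne_one (fun x => by simp [genFun_succ_left]) Q r n,
      ih, genFun_zero_zero, pairing_one_apply, ← X_dvd_iff]
    convert (X_pow_mul_X_add_C_pow_succ_dvd_iff 0 r Q 0 n).symm using 2 <;> simp [pow_succ']

theorem forall_le_pairing_genFun_iff (n m : ℕ) (P : ℂ[X]) :
    (∀ x ≤ n, ∀ y ≤ m, pairing (genFun x y) P = 0) ↔ X ^ (n + 1) * (X + C aMinus) ^ m ∣ P := by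
  induction m generalizing P with
  | zero => simpa using forall_le_pairing_genFun_zero_iff n P
  | succ m ih =>
    obtain ⟨Q, r, rfl⟩ := exists_eq_X_add_C_mul_add_C P aMinus
    have haMinus : aMinus ≠ aPlus := fun h => I_ne_zero (by rw [← aPlus_sub_aMinus, h, sub_self])
    simp only [forall_le_succ_pairing_eq_zero_iff haMinus (genFun_succ_right _) Q r m,
      imp_and, forall_and, ih, forall_le_pairing_genFun_zero_iff]
    exact (X_pow_mul_X_add_C_pow_succ_dvd_iff aMinus r Q n m).symm

theorem forall_mem_RRect_iff {l : GaussianInt} (hl : 0 ≤ l.re) (him : 0 ≤ l.im)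
    (p : GaussianInt → Prop) :
    (∀ w ∈ RRect l, p w) ↔ ∀ x ≤ l.re.toNat, ∀ y ≤ l.im.toNat, p (natPt x y) := by
  constructor
  · intro h x hx y hy
    refine h _ ⟨Int.natCast_nonneg x, by simp [natPt]; omega, ?_, by simp [natPt]; positivity⟩
    simp only [natPt, Nat.abs_cast, abs_of_nonneg him]
    omega
  · rintro h ⟨u, v⟩ ⟨hu, hul, hv, hvl⟩
    dsimp only at hu hul hv hvl
    have hv0 : 0 ≤ v := by
      rcases him.lt_or_eq with hpos | hzero
      · exact nonneg_of_mul_nonneg_left hvl hpos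
      · simp [← hzero] at hv
        omega
    rw [abs_of_nonneg hv0, abs_of_nonneg him] at hv
    simpa [natPt, hu, hv0] using h u.toNat (by omega) v.toNat (by omega)

theorem exists_coeff_ne_zero_natDegree_le_of_dvd {R : Type*} [CommRing R] [IsDomain R]
    {M : ℕ} {a : ℕ → R} {D : R[X]} (hD : D ∣ ∑ n ∈ range (M + 1), C (a n) * X ^ n)
    (ha : ∃ n ≤ M, a n ≠ 0) : ∃ n ≤ M, a n ≠ 0 ∧ D.natDegree ≤ n := by
  set P := ∑ n ∈ range (M + 1), C (a n) * X ^ n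
  have hcoeff (k : ℕ) : P.coeff k = if k ≤ M then a k else 0 := by
    simp [P]
  have hP : P ≠ 0 := by
    obtain ⟨n, hn, han⟩ := ha
    exact fun h0 => han (by simpa [h0, hn] using (hcoeff n).symm)
  have hdeg : P.natDegree ≤ M :=
    natDegree_le_iff_coeff_eq_zero.2 fun k hk => by rw [hcoeff, if_neg (by omega)]
  refine ⟨P.natDegree, hdeg, ?_, natDegree_le_of_dvd hD hP⟩
  have hlead := hcoeff P.natDegree
  rw [if_pos hdeg] at hlead
  exact hlead ▸ leadingCoeff_ne_zero.2 hP

/-- Let `λ ∈ Λ₊` with `Im λ ≥ 0`, `N = Re λ + 1`, `m = Im λ`. A discrete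
analytic polynomial `p = Σ_{n ≤ M} aₙ z⁽ⁿ⁾` vanishes on `R_λ` iff the polynomial
`Σ aₙ Xⁿ` is divisible by `Xᴺ (X + α₋)ᵐ`; in particular every nonzero discrete analytic
polynomial vanishing on `R_λ` has degree at least `Re λ + Im λ + 1`. -/
theorem stmt19 (l : GaussianInt) (hl : 0 ≤ l.re) (him : 0 ≤ l.im) (M : ℕ) (a : ℕ → ℂ) :
    ((∀ w ∈ RRect l, ∑ n ∈ Finset.range (M + 1), a n * zpoly n w = 0) ↔
      Polynomial.X ^ (l.re.toNat + 1) * (Polynomial.X + Polynomial.C aMinus) ^ l.im.toNat ∣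
        ∑ n ∈ Finset.range (M + 1), Polynomial.C (a n) * Polynomial.X ^ n) ∧
    ((∀ w ∈ RRect l, ∑ n ∈ Finset.range (M + 1), a n * zpoly n w = 0) →
      (∃ n, n ≤ M ∧ a n ≠ 0) →
      ∃ n, n ≤ M ∧ a n ≠ 0 ∧ l.re.toNat + l.im.toNat + 1 ≤ n) := by
  have hvanish : (∀ w ∈ RRect l, ∑ n ∈ range (M + 1), a n * zpoly n w = 0) ↔
      X ^ (l.re.toNat + 1) * (X + C aMinus) ^ l.im.toNat ∣
        ∑ n ∈ range (M + 1), C (a n) * X ^ n := by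
    simp only [forall_mem_RRect_iff hl him, zpoly_natPt, ← forall_le_pairing_genFun_iff,
      pairing_sum_C_mul_X_pow]
  refine ⟨hvanish, fun h ha => ?_⟩
  obtain ⟨n, hn, han, hdeg⟩ := exists_coeff_ne_zero_natDegree_le_of_dvd (hvanish.1 h) ha
  refine ⟨n, hn, han, ?_⟩
  rwa [(monic_X_pow _).natDegree_mul ((monic_X_add_C _).pow _), natDegree_X_pow,
    natDegree_pow, natDegree_X_add_C, mul_one, add_right_comm] at hdeg

end
end
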